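/- If M ∈ ℰ₃ and dim(M) = n, then χ(M) ≤ ⌊n/2⌋ + 1. Moreover, for every n ≥ 1 there exists an n-dimensional matroid M ∈ ℰ₃ with χ(M) = ⌊n/2⌋ + 1. -/

import Mathlib

/-- A simple binary matroid `M = (E, G)`: a dimension `n` together with a ground set `E`
of nonzero vectors of `𝔽₂ⁿ` (the points of `G = 𝔽₂ⁿ \ {0}`). -/
structure BinMatroid where
  dim : ℕ
  E : Set (Fin dim → ZMod 2)
  zero_not_mem : 0 ∉ E

namespace BinMatroid

/-- `M.HasIR N` : `M` contains `N` as an induced restriction, i.e. there is an injective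
linear map `φ` with `φ(E(N)) = E(M) ∩ (φ(G') \ {0})`. -/
def HasIR (M N : BinMatroid) : Prop :=
  ∃ φ : (Fin N.dim → ZMod 2) →ₗ[ZMod 2] (Fin M.dim → ZMod 2),
    Function.Injective φ ∧ φ '' N.E = M.E ∩ (Set.range φ \ {0})

/-- Isomorphism of binary matroids: a bijective induced embedding. -/
def Iso (M N : BinMatroid) : Prop :=
  ∃ φ : (Fin N.dim → ZMod 2) →ₗ[ZMod 2] (Fin M.dim → ZMod 2),
    Function.Bijective φ ∧ φ '' N.E = M.E ∩ (Set.range φ \ {0})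

/-- The critical number of the induced restriction of the ground set `E` to the flat of
the subspace `F`: the least `k` such that some flat of `F` of dimension `dim F - k`
is disjoint from `E`. -/
noncomputable def critNumRes {n : ℕ} (E : Set (Fin n → ZMod 2))
    (F : Submodule (ZMod 2) (Fin n → ZMod 2)) : ℕ :=
  sInf {k : ℕ | ∃ W : Submodule (ZMod 2) (Fin n → ZMod 2), W ≤ F ∧
    Module.finrank (ZMod 2) W = Module.finrank (ZMod 2) F - k ∧
    Disjoint ((W : Set (Fin n → ZMod 2)) \ {0}) E}

/-- The critical number `χ(M)`: the least `k ≥ 0` such that some flat of dimension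
`n - k` is disjoint from `E`. -/
noncomputable def critNum (M : BinMatroid) : ℕ :=
  sInf {k : ℕ | ∃ W : Submodule (ZMod 2) (Fin M.dim → ZMod 2),
    Module.finrank (ZMod 2) W = M.dim - k ∧
    Disjoint ((W : Set (Fin M.dim → ZMod 2)) \ {0}) M.E}

/-- `M ∈ ℰ_k` : every induced restriction of `M` to a flat of dimension at least `k`
has even size. -/
def MemE (k : ℕ) (M : BinMatroid) : Prop :=
  ∀ W : Submodule (ZMod 2) (Fin M.dim → ZMod 2),
    k ≤ Module.finrank (ZMod 2) W →
    Even (M.E ∩ ((W : Set (Fin M.dim → ZMod 2)) \ {0})).ncard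

/-- `M` is full-rank: `E` spans `𝔽₂ⁿ`. -/
def FullRank (M : BinMatroid) : Prop :=
  Submodule.span (ZMod 2) M.E = ⊤

/-- `M` is (isomorphic to) the doubling of `M₀`: `M₀` is identified, via an injective
linear map `φ`, with the restriction of `M` to a hyperplane `H = range φ`, there is
`w ∈ G − (E ∪ H)`, and `E = (E ∩ H) ∪ (w + (E ∩ H))`. -/
def IsDoublingOf (M M₀ : BinMatroid) : Prop :=
  M.dim = M₀.dim + 1 ∧
  ∃ φ : (Fin M₀.dim → ZMod 2) →ₗ[ZMod 2] (Fin M.dim → ZMod 2),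
    Function.Injective φ ∧
    ∃ w : Fin M.dim → ZMod 2, w ≠ 0 ∧ w ∉ Set.range φ ∧ w ∉ M.E ∧
      M.E = φ '' M₀.E ∪ (fun x => w + x) '' (φ '' M₀.E)

/-- `M` arises from `M₀` by a (possibly empty) sequence of doublings. -/
def ArisesByDoublings (M M₀ : BinMatroid) : Prop :=
  ∃ M' : BinMatroid,
    Relation.ReflTransGen (fun A B => IsDoublingOf B A) M₀ M' ∧ M.Iso M'

/-- `M` is (a copy of) `AG°(t−1, 2)`, the matroid `((G − H) ∪ {x}, G)` with `H` a
hyperplane of `G` and `x ∈ H`, where `t = M.dim`. -/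
def IsAGo (M : BinMatroid) : Prop :=
  ∃ H : Submodule (ZMod 2) (Fin M.dim → ZMod 2),
    Module.finrank (ZMod 2) H + 1 = M.dim ∧
    ∃ x ∈ (H : Set (Fin M.dim → ZMod 2)) \ {0},
      M.E = ({v | v ≠ 0} \ (H : Set (Fin M.dim → ZMod 2))) ∪ {x}

/-- `M` is a Bose–Burton geometry of order `k`: `E = G − F` for a flat `F` of
dimension `n − k`. -/
def IsBoseBurton (M : BinMatroid) (k : ℕ) : Prop :=
  k ≤ M.dim ∧ ∃ W : Submodule (ZMod 2) (Fin M.dim → ZMod 2),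
    Module.finrank (ZMod 2) W = M.dim - k ∧
    M.E = {v | v ≠ 0} \ (W : Set (Fin M.dim → ZMod 2))

/-- The ground set `E` (of a matroid of the ambient dimension `n`) is the semidoubling
of its restriction to the hyperplane `H₁` with respect to the hyperplane `H₀` of `H₁`:
there is `w ∈ G − (E ∪ H₁)` with `|{x, x+w} ∩ E| ∈ {0, 2}` for every `x ∈ H₀` and
`|{x, x+w} ∩ E| = 1` for every `x ∈ H₁ − H₀`. -/
def IsSemidoublingWrt {n : ℕ} (E : Set (Fin n → ZMod 2))
    (H₁ H₀ : Submodule (ZMod 2) (Fin n → ZMod 2)) : Prop :=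
  H₀ ≤ H₁ ∧ Module.finrank (ZMod 2) H₀ + 1 = Module.finrank (ZMod 2) H₁ ∧
  ∃ w : Fin n → ZMod 2, w ≠ 0 ∧ w ∉ H₁ ∧ w ∉ E ∧
    (∀ x ∈ (H₀ : Set (Fin n → ZMod 2)) \ {0},
      (({x, x + w} : Set (Fin n → ZMod 2)) ∩ E).ncard = 0 ∨
      (({x, x + w} : Set (Fin n → ZMod 2)) ∩ E).ncard = 2) ∧
    (∀ x ∈ (H₁ : Set (Fin n → ZMod 2)) \ (H₀ : Set (Fin n → ZMod 2)),
      (({x, x + w} : Set (Fin n → ZMod 2)) ∩ E).ncard = 1)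

/-- The ground set `E` is a semidoubling of its restriction to the hyperplane `H₁`
(with respect to some hyperplane `H₀` of `H₁`). -/
def IsSemidoublingOfRes {n : ℕ} (E : Set (Fin n → ZMod 2))
    (H₁ : Submodule (ZMod 2) (Fin n → ZMod 2)) : Prop :=
  ∃ H₀ : Submodule (ZMod 2) (Fin n → ZMod 2), IsSemidoublingWrt E H₁ H₀

/-- `M` is (isomorphic to) a semidoubling of `M₀`: `M₀` is identified, via an injective
linear map `φ`, with the restriction of `M` to the hyperplane `range φ`, and `M` is a
semidoubling of that restriction. -/
def IsSemidoublingOf (M M₀ : BinMatroid) : Prop :=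
  M.dim = M₀.dim + 1 ∧
  ∃ φ : (Fin M₀.dim → ZMod 2) →ₗ[ZMod 2] (Fin M.dim → ZMod 2),
    Function.Injective φ ∧
    φ '' M₀.E = M.E ∩ (Set.range φ \ {0}) ∧
    IsSemidoublingOfRes M.E (LinearMap.range φ)

/-- `M` arises from `M₀` by a (possibly empty) sequence of semidoublings. -/
def ArisesBySemidoublings (M M₀ : BinMatroid) : Prop :=
  ∃ M' : BinMatroid,
    Relation.ReflTransGen (fun A B => IsSemidoublingOf B A) M₀ M' ∧ M.Iso M'

end BinMatroid

/-- A triangle of `G`: a set `{x, y, z}` of three distinct nonzero vectors with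
`x + y + z = 0`. -/
def IsTriangle {n : ℕ} (T : Set (Fin n → ZMod 2)) : Prop :=
  ∃ x y z : Fin n → ZMod 2, x ≠ 0 ∧ y ≠ 0 ∧ z ≠ 0 ∧
    x ≠ y ∧ x ≠ z ∧ y ≠ z ∧ x + y + z = 0 ∧ T = {x, y, z}

/-- `I₃`, the claw: the 3-dimensional matroid whose ground set is the three standard
basis vectors of `𝔽₂³`. -/
def I3 : BinMatroid where
  dim := 3
  E := Set.range fun i : Fin 3 => (Pi.single i 1 : Fin 3 → ZMod 2)
  zero_not_mem := by
    rintro ⟨i, hi⟩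
    have := congrFun hi i
    simp [Pi.single_eq_same] at this

/-- `F₇`, the Fano plane: the 3-dimensional matroid whose ground set is all of
`𝔽₂³ \ {0}`. -/
def F7 : BinMatroid where
  dim := 3
  E := {v | v ≠ 0}
  zero_not_mem := by simp

/-- `K₅`: the 4-dimensional matroid whose ground set is the set of vectors of Hamming
weight 1 or 2 in `𝔽₂⁴`. -/
def K5 : BinMatroid where
  dim := 4
  E := {v | hammingNorm v = 1 ∨ hammingNorm v = 2}
  zero_not_mem := by
    intro h
    simp only [Set.mem_setOf_eq, hammingNorm_zero] at h
    omega

/-!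
`M ∈ ℰ₃` says exactly that the indicator `f` of `E` has vanishing third differences
`f (a+b+c) + f (a+b) + f (a+c) + f (b+c) + f a + f b + f c = 0`: for independent `a, b, c` this
sum counts `E` on the flat they span, and for dependent ones it vanishes identically. So
`E = {x | Q x = 1}` for a quadratic form `Q` over `𝔽₂`, and conversely every such `E` is in `ℰ₃`.

A flat disjoint from `E` is then a subspace on which `Q` vanishes. Over `𝔽₂` every quadratic form
in dimension at least 3 has a nonzero zero `v`; cutting down to `v^⊥ ∩ ker ℓ` with `ℓ v ≠ 0` and
adding `v` back gives, by induction, such a subspace of dimension at least `(n - 2) / 2`, so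
`χ(M) ≤ ⌊n/2⌋ + 1`. Equality holds for the sum of `⌊(n-1)/2⌋` hyperbolic planes and an
anisotropic form of dimension 1 or 2: a totally singular subspace misses one of the two basis
vectors of the first hyperbolic plane, so cutting it by the other coordinate and projecting the
plane away is injective, and by induction its dimension is at most `⌊(n-1)/2⌋`.
-/

open Module

lemma Submodule.finrank_le_finrank_inf_ker_add_one {K V : Type*} [Field K] [AddCommGroup V]
    [Module K V] [FiniteDimensional K V] (S : Submodule K V) (ℓ : V →ₗ[K] K) :
    finrank K S ≤ finrank K ↥(S ⊓ LinearMap.ker ℓ) + 1 := by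
  have hsup := Submodule.finrank_sup_add_finrank_inf_eq S (LinearMap.ker ℓ)
  have hle := Submodule.finrank_le (S ⊔ LinearMap.ker ℓ)
  have hker := LinearMap.finrank_range_add_finrank_ker ℓ
  have hrange : finrank K (LinearMap.range ℓ) ≤ 1 := by
    simpa using Submodule.finrank_le (LinearMap.range ℓ)
  omega

lemma Submodule.finrank_le_finrank_map_inf_ker_add_one {K V V' : Type*} [Field K]
    [AddCommGroup V] [Module K V] [FiniteDimensional K V] [AddCommGroup V'] [Module K V']
    (S : Submodule K V) (ℓ : V →ₗ[K] K) (π : V →ₗ[K] V')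
    (h : S ⊓ LinearMap.ker ℓ ⊓ LinearMap.ker π = ⊥) :
    finrank K S ≤ finrank K ↥((S ⊓ LinearMap.ker ℓ).map π) + 1 := by
  set T := S ⊓ LinearMap.ker ℓ
  have hinj : Function.Injective (π.comp T.subtype) := by
    rw [injective_iff_map_eq_zero]
    rintro ⟨x, hx⟩ hπx
    have hx0 : x ∈ T ⊓ LinearMap.ker π := ⟨hx, hπx⟩
    rw [h, Submodule.mem_bot] at hx0
    exact Subtype.ext hx0
  have hT : finrank K ↥(T.map π) = finrank K T := by
    rw [← LinearMap.finrank_range_of_inj hinj, LinearMap.range_comp, Submodule.range_subtype]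
  rw [hT]
  exact S.finrank_le_finrank_inf_ker_add_one ℓ

section CharTwoSums

variable {G M : Type*} [AddCommGroup G] [Module (ZMod 2) G] [Fintype G]

lemma Fintype.sum_eq_zero_of_add_periodic [AddCommGroup M] [Module (ZMod 2) M] (g : G → M)
    {w : G} (hw : w ≠ 0) (hg : ∀ x, g (x + w) = g x) : ∑ x, g x = 0 :=
  Finset.sum_ninvolution (· + w) (fun x => by rw [hg, ZModModule.add_self])
    (fun x _ => by simpa using hw) (fun _ => Finset.mem_univ _)
    (fun x => by rw [add_assoc, ZModModule.add_self, add_zero])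

lemma Fintype.sum_eq_sum_ite_ker [AddCommMonoid M] (g : G → M) (ℓ : G →ₗ[ZMod 2] ZMod 2)
    {v : G} (hv : ℓ v = 1) :
    ∑ x, g x = ∑ x, if ℓ x = 0 then g x + g (x + v) else 0 := by
  have hshift : ∑ x, (if ℓ x = 0 then g (x + v) else 0) = ∑ x, (if ℓ x = 0 then 0 else g x) :=
    Fintype.sum_equiv (Equiv.addRight v) _ _ fun x => by
      have hℓ : ∀ a : ZMod 2, a + 1 = 0 ↔ ¬ a = 0 := by decide
      simp only [Equiv.coe_addRight, map_add, hv, hℓ, ite_not]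
  calc ∑ x, g x = ∑ x, ((if ℓ x = 0 then g x else 0) + if ℓ x = 0 then 0 else g x) := by
        simp only [ite_add_ite, add_zero, zero_add, ite_self]
    _ = ∑ x, if ℓ x = 0 then g x + g (x + v) else 0 := by
        rw [Finset.sum_add_distrib, ← hshift, ← Finset.sum_add_distrib]
        simp only [ite_add_ite, add_zero]

end CharTwoSums

namespace QuadraticMap

def IsTotallySingular {R M N : Type*} [CommSemiring R] [AddCommMonoid M] [Module R M]
    [AddCommMonoid N] [Module R N] (Q : QuadraticMap R M N) (W : Submodule R M) : Prop :=
  ∀ x ∈ W, Q x = 0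

lemma Anisotropic.eq_bot_of_isTotallySingular {R M N : Type*} [CommSemiring R]
    [AddCommMonoid M] [Module R M] [AddCommMonoid N] [Module R N] {Q : QuadraticMap R M N}
    (hQ : Q.Anisotropic) {W : Submodule R M} (hW : Q.IsTotallySingular W) : W = ⊥ :=
  (Submodule.eq_bot_iff W).2 fun x hx => hQ x (hW x hx)

lemma disjoint_setOf_eq_one_iff {V : Type*} [AddCommGroup V] [Module (ZMod 2) V]
    (Q : QuadraticForm (ZMod 2) V) (W : Submodule (ZMod 2) V) :
    Disjoint ((W : Set V) \ {0}) {x | Q x = 1} ↔ Q.IsTotallySingular W := by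
  refine ⟨fun h x hx => ?_, fun h => Set.disjoint_left.2 fun x hx hQx => ?_⟩
  · by_cases hx0 : x = 0
    · rw [hx0, QuadraticMap.map_zero]
    · by_contra hQx
      exact Set.disjoint_left.1 h ⟨hx, hx0⟩ (Fin.eq_one_of_ne_zero _ hQx)
  · have : Q x = 1 := hQx
    rw [h x hx.1] at this
    exact zero_ne_one this

variable {V : Type*} [AddCommGroup V] [Module (ZMod 2) V] [FiniteDimensional (ZMod 2) V]
  (Q : QuadraticForm (ZMod 2) V)

/-- For `a ≠ 0` and `b ∈ a^⊥ \ 𝔽₂ a`, the values `Q a, Q b, Q (a + b)` sum to `0`, so they are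
not all `1`. -/
theorem exists_ne_zero_apply_eq_zero {S : Submodule (ZMod 2) V}
    (hS : 3 ≤ finrank (ZMod 2) S) : ∃ v ∈ S, v ≠ 0 ∧ Q v = 0 := by
  obtain ⟨a, haS, ha0⟩ := Submodule.exists_mem_ne_zero_of_ne_bot (p := S)
    (by rintro rfl; simp at hS)
  obtain ⟨b, ⟨hbS, hab⟩, hba⟩ :
      ∃ b ∈ S ⊓ LinearMap.ker (polarBilin Q a), b ∉ (ZMod 2) ∙ a := by
    by_contra! h
    have hle := Submodule.finrank_mono h
    have hker := S.finrank_le_finrank_inf_ker_add_one (polarBilin Q a)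
    have hspan := finrank_span_singleton ha0 (K := ZMod 2)
    omega
  have hb0 : b ≠ 0 := by rintro rfl; exact hba (Submodule.zero_mem _)
  have hab0 : a + b ≠ 0 := fun h => hba <| by
    rw [← neg_eq_of_add_eq_zero_right h]
    exact Submodule.neg_mem _ (Submodule.mem_span_singleton_self a)
  have hsum : Q a + Q b + Q (a + b) = 0 := by
    have hpolar : polar Q a b = 0 := hab
    rw [QuadraticMap.map_add Q, hpolar]
    grind
  by_contra! hne
  rw [Fin.eq_one_of_ne_zero _ (hne a haS ha0), Fin.eq_one_of_ne_zero _ (hne b hbS hb0),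
    Fin.eq_one_of_ne_zero _ (hne _ (S.add_mem haS hbS) hab0)] at hsum
  exact absurd hsum (by decide)

theorem exists_isTotallySingular_le (S : Submodule (ZMod 2) V) :
    ∃ W ≤ S, Q.IsTotallySingular W ∧ finrank (ZMod 2) S ≤ 2 * finrank (ZMod 2) W + 2 := by
  induction hn : finrank (ZMod 2) S using Nat.strong_induction_on generalizing S with
  | _ n ih =>
  by_cases h2 : n ≤ 2
  · exact ⟨⊥, bot_le, fun x hx => by rw [(Submodule.mem_bot _).1 hx, QuadraticMap.map_zero],
      by omega⟩
  obtain ⟨v, hvS, hv0, hQv⟩ := Q.exists_ne_zero_apply_eq_zero (S := S) (by omega)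
  obtain ⟨ℓ, hℓ⟩ := Projective.exists_dual_ne_zero (ZMod 2) hv0
  set K := S ⊓ LinearMap.ker (polarBilin Q v) ⊓ LinearMap.ker ℓ
  have hvK : v ∉ K := fun h => hℓ h.2
  have hKS : K ≤ S := inf_le_left.trans inf_le_left
  have hSK : finrank (ZMod 2) S ≤ finrank (ZMod 2) K + 2 := by
    have h1 := S.finrank_le_finrank_inf_ker_add_one (polarBilin Q v)
    have h2 : _ ≤ finrank (ZMod 2) K + 1 :=
      (S ⊓ LinearMap.ker (polarBilin Q v)).finrank_le_finrank_inf_ker_add_one ℓ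
    omega
  have hKlt : finrank (ZMod 2) K < n :=
    hn ▸ Submodule.finrank_lt_finrank_of_lt (lt_of_le_of_ne hKS fun h => hvK (h ▸ hvS))
  obtain ⟨W, hWK, hW, hKW⟩ := ih _ hKlt K rfl
  have hvW : v ∉ W := fun h => hvK (hWK h)
  refine ⟨W ⊔ (ZMod 2) ∙ v,
    sup_le (hWK.trans hKS) ((Submodule.span_singleton_le_iff_mem _ _).2 hvS), ?_, ?_⟩
  · intro x hx
    obtain ⟨w, hw, y, hy, rfl⟩ := Submodule.mem_sup.1 hx
    obtain ⟨c, rfl⟩ := Submodule.mem_span_singleton.1 hy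
    have hpolar : polar Q v w = 0 := (hWK hw).1.2
    rw [QuadraticMap.map_add Q, QuadraticMap.map_smul, polar_smul_right, polar_comm, hpolar,
      hW w hw, hQv]
    simp
  · rw [Submodule.finrank_sup_span_singleton hvW]
    omega

end QuadraticMap

section EvenOnFlats

variable {V : Type*} [AddCommGroup V] [Module (ZMod 2) V]

lemma Submodule.sum_eq_ncard_setOf_eq_one (f : V → ZMod 2) (hf0 : f 0 = 0)
    (W : Submodule (ZMod 2) V) [Fintype W] :
    ∑ x : W, f x = (({x | f x = 1} ∩ (W \ {0}) : Set V).ncard : ZMod 2) := by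
  classical
  have hset : ({x | f x = 1} ∩ (W \ {0}) : Set V) = Subtype.val '' {x : W | f x = 1} := by
    ext x
    constructor
    · rintro ⟨hx, hxW, -⟩
      exact ⟨⟨x, hxW⟩, hx, rfl⟩
    · rintro ⟨x, hx, rfl⟩
      refine ⟨hx, x.2, fun h => ?_⟩
      have hx' : f x = 1 := hx
      rw [Set.mem_singleton_iff.1 h, hf0] at hx'
      exact zero_ne_one hx'
  rw [hset, Set.ncard_image_of_injective _ Subtype.val_injective, Set.ncard_eq_toFinset_card',
    Set.toFinset_ofPred, ← Finset.sum_boole]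
  refine Finset.sum_congr rfl fun x _ => ?_
  rcases (show ∀ a : ZMod 2, a = 0 ∨ a = 1 by decide) (f x) with h | h <;> simp [h]

/-- The sum over `(a, b, c) ∈ 𝔽₂³` of `f (s a + t b + u c)` counts `{f = 1}` on the flat spanned by
`a, b, c` when they are independent, and cancels in pairs `p, p + k` with `k` in the kernel
otherwise. -/
lemma map_add_add_add_map_of_even (f : V → ZMod 2) (hf0 : f 0 = 0)
    (h : ∀ W : Submodule (ZMod 2) V, 3 ≤ finrank (ZMod 2) W →
      Even ({x | f x = 1} ∩ (W \ {0}) : Set V).ncard) (a b c : V) :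
    f (a + b + c) + (f a + f b + f c) = f (a + b) + f (b + c) + f (c + a) := by
  let g : ZMod 2 × ZMod 2 × ZMod 2 →ₗ[ZMod 2] V := (LinearMap.toSpanSingleton _ _ a).coprod
    ((LinearMap.toSpanSingleton _ _ b).coprod (LinearMap.toSpanSingleton _ _ c))
  have hsum : ∑ p, f (g p) = 0 := by
    by_cases hg : Function.Injective g
    · classical
      rw [Fintype.sum_equiv (LinearEquiv.ofInjective g hg).toEquiv (fun p => f (g p))
          (fun x => f x) fun _ => rfl,
        (LinearMap.range g).sum_eq_ncard_setOf_eq_one f hf0, ZMod.natCast_eq_zero_iff_even]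
      exact h _ (by rw [LinearMap.finrank_range_of_inj hg]; simp)
    · obtain ⟨k, hk, hk0⟩ := Submodule.exists_mem_ne_zero_of_ne_bot
        fun h => hg (LinearMap.ker_eq_bot.1 h)
      exact Fintype.sum_eq_zero_of_add_periodic _ hk0 fun p => by
        rw [map_add, LinearMap.mem_ker.1 hk, add_zero]
  have hsum2 : ∀ φ : ZMod 2 → ZMod 2, ∑ s, φ s = φ 0 + φ 1 := Fin.sum_univ_two
  simp only [g, Fintype.sum_prod_type, hsum2, LinearMap.coprod_apply,
    LinearMap.toSpanSingleton_apply, zero_smul, one_smul, add_zero, zero_add, hf0] at hsum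
  grind

/-- The pairing `x ↔ x + v` across a hyperplane not containing an isotropic `v` turns the sum of
`Q` into the sum of the linear form `polar Q · v` over that hyperplane, which cancels in pairs. -/
theorem QuadraticMap.sum_eq_zero [Fintype V] [FiniteDimensional (ZMod 2) V]
    (Q : QuadraticForm (ZMod 2) V) (hV : 3 ≤ finrank (ZMod 2) V) : ∑ x, Q x = 0 := by
  obtain ⟨v, -, hv0, hQv⟩ := Q.exists_ne_zero_apply_eq_zero (S := ⊤) (by rwa [finrank_top])
  obtain ⟨ℓ, hℓ⟩ := Projective.exists_dual_ne_zero (ZMod 2) hv0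
  set K := (⊤ : Submodule (ZMod 2) V) ⊓ LinearMap.ker ℓ ⊓ LinearMap.ker (polarBilin Q v)
  have hK : 1 ≤ finrank (ZMod 2) K := by
    have h1 := (⊤ : Submodule (ZMod 2) V).finrank_le_finrank_inf_ker_add_one ℓ
    have h2 : _ ≤ finrank (ZMod 2) K + 1 :=
      ((⊤ : Submodule (ZMod 2) V) ⊓ LinearMap.ker ℓ).finrank_le_finrank_inf_ker_add_one
        (polarBilin Q v)
    rw [finrank_top] at h1
    omega
  obtain ⟨w, ⟨⟨-, hℓw⟩, hvw⟩, hw0⟩ := Submodule.exists_mem_ne_zero_of_ne_bot (p := K)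
    (by intro h; rw [h, finrank_bot] at hK; omega)
  have hpair : ∀ y, Q y + Q (y + v) = polar Q y v := fun y => by
    rw [QuadraticMap.map_add Q, hQv, add_zero, ← add_assoc, ZModModule.add_self, zero_add]
  have hpolar : polar Q w v = 0 := by rw [polar_comm]; exact hvw
  rw [Fintype.sum_eq_sum_ite_ker _ ℓ (Fin.eq_one_of_ne_zero _ hℓ)]
  refine Fintype.sum_eq_zero_of_add_periodic _ hw0 fun x => ?_
  rw [map_add, show ℓ w = 0 from hℓw, add_zero, hpair, hpair, QuadraticMap.polar_add_left,
    hpolar, add_zero]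

theorem forall_even_ncard_iff_exists_quadraticForm [FiniteDimensional (ZMod 2) V] {E : Set V}
    (hE : 0 ∉ E) :
    (∀ W : Submodule (ZMod 2) V, 3 ≤ finrank (ZMod 2) W → Even (E ∩ (W \ {0}) : Set V).ncard) ↔
      ∃ Q : QuadraticForm (ZMod 2) V, E = {x | Q x = 1} := by
  constructor
  · intro h
    classical
    let f : V → ZMod 2 := fun x => if x ∈ E then 1 else 0
    have hfE : {x | f x = 1} = E := by ext x; by_cases hx : x ∈ E <;> simp [f, hx]
    have hf0 : f 0 = 0 := if_neg hE
    have hf : ∀ a b c, f (a + b + c) + (f a + f b + f c) = f (a + b) + f (b + c) + f (c + a) :=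
      map_add_add_add_map_of_even f hf0 (hfE ▸ h)
    have hsmul : ∀ (a : ZMod 2) x, f (a • x) = (a * a) • f x := by
      intro a x
      rcases (show ∀ a : ZMod 2, a = 0 ∨ a = 1 by decide) a with rfl | rfl <;> simp [hf0]
    have hpolar_smul : ∀ (a : ZMod 2) x y, QuadraticMap.polar f (a • x) y =
        a • QuadraticMap.polar f x y := by
      intro a x y
      rcases (show ∀ a : ZMod 2, a = 0 ∨ a = 1 by decide) a with rfl | rfl <;>
        simp [QuadraticMap.polar, hf0]
    exact ⟨QuadraticMap.ofPolar f hsmul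
      (fun x x' y => QuadraticMap.polar_add_left_iff.2 (hf x x' y)) hpolar_smul, hfE.symm⟩
  · rintro ⟨Q, rfl⟩ W hW
    have : Finite V := Module.finite_of_finite (ZMod 2)
    have : Fintype W := Fintype.ofFinite W
    rw [← ZMod.natCast_eq_zero_iff_even, ← W.sum_eq_ncard_setOf_eq_one Q Q.map_zero]
    exact (Q.comp W.subtype).sum_eq_zero hW

end EvenOnFlats

lemma Fin.eq_zero_of_zero_of_one_of_succ_succ {α : Type*} [Zero α] {n : ℕ}
    {x : Fin (n + 2) → α} (h0 : x 0 = 0) (h1 : x 1 = 0) (h : ∀ i : Fin n, x i.succ.succ = 0) :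
    x = 0 := by
  funext i
  induction i using Fin.cases with
  | zero => exact h0
  | succ i => induction i using Fin.cases with
    | zero => exact h1
    | succ i => exact h i

namespace QuadraticMap

/-- The sum of `⌊(n-1)/2⌋` hyperbolic planes `x₀x₁ + x₂x₃ + ⋯` and, on the last coordinates, the
anisotropic form `x` (`n` odd) or `xy + x + y` (`n` even). -/
noncomputable def lowIndexForm : (n : ℕ) → QuadraticForm (ZMod 2) (Fin n → ZMod 2)
  | 0 => 0
  | 1 => proj 0 0
  | 2 => proj 0 1 + proj 0 0 + proj 1 1
  | n + 3 => proj 0 1 +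
      (lowIndexForm (n + 1)).comp (LinearMap.funLeft (ZMod 2) (ZMod 2) fun i => i.succ.succ)

theorem finrank_le_of_isTotallySingular_lowIndexForm :
    ∀ (n : ℕ) (W : Submodule (ZMod 2) (Fin n → ZMod 2)),
      (lowIndexForm n).IsTotallySingular W → finrank (ZMod 2) W ≤ (n - 1) / 2
  | 0, W, _ => by simpa using Submodule.finrank_le W
  | 1, W, hW => by
    rw [Anisotropic.eq_bot_of_isTotallySingular (fun x hx => ?_) hW, finrank_bot]
    have hx0 : x 0 * x 0 = 0 := hx
    funext i
    rw [Fin.fin_one_eq_zero i]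
    exact mul_self_eq_zero.1 hx0
  | 2, W, hW => by
    rw [Anisotropic.eq_bot_of_isTotallySingular (fun x hx => ?_) hW, finrank_bot]
    have hx01 : x 0 * x 1 + x 0 * x 0 + x 1 * x 1 = 0 := hx
    obtain ⟨h0, h1⟩ := (show ∀ a b : ZMod 2, a * b + a * a + b * b = 0 → a = 0 ∧ b = 0 by
      decide) _ _ hx01
    funext i
    fin_cases i
    exacts [h0, h1]
  | n + 3, W, hW => by
    set π : (Fin (n + 3) → ZMod 2) →ₗ[ZMod 2] (Fin (n + 1) → ZMod 2) :=
      LinearMap.funLeft (ZMod 2) (ZMod 2) fun i => i.succ.succ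
    have happly : ∀ x, lowIndexForm (n + 3) x = x 0 * x 1 + lowIndexForm (n + 1) (π x) :=
      fun x => rfl
    obtain ⟨a, ha, hker⟩ : ∃ a : Fin (n + 3), (a = 0 ∨ a = 1) ∧
        W ⊓ LinearMap.ker (LinearMap.proj a) ⊓ LinearMap.ker π = ⊥ := by
      by_contra! h
      obtain ⟨x, ⟨⟨hxW, hx0⟩, hxπ⟩, hx⟩ :=
        Submodule.exists_mem_ne_zero_of_ne_bot (h 0 (.inl rfl))
      obtain ⟨y, ⟨⟨hyW, hy1⟩, hyπ⟩, hy⟩ :=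
        Submodule.exists_mem_ne_zero_of_ne_bot (h 1 (.inr rfl))
      have hx1 : x 1 = 1 := Fin.eq_one_of_ne_zero _ fun hx1 =>
        hx (Fin.eq_zero_of_zero_of_one_of_succ_succ hx0 hx1 fun i => congrFun hxπ i)
      have hy0 : y 0 = 1 := Fin.eq_one_of_ne_zero _ fun hy0 =>
        hy (Fin.eq_zero_of_zero_of_one_of_succ_succ hy0 hy1 fun i => congrFun hyπ i)
      have := hW _ (W.add_mem hxW hyW)
      rw [happly, map_add, LinearMap.mem_ker.1 hxπ, LinearMap.mem_ker.1 hyπ, add_zero,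
        QuadraticMap.map_zero] at this
      simp [hx1, hy0, show x 0 = 0 from hx0, show y 1 = 0 from hy1] at this
    have hsing : (lowIndexForm (n + 1)).IsTotallySingular
        ((W ⊓ LinearMap.ker (LinearMap.proj a)).map π) := by
      rintro _ ⟨x, ⟨hxW, hxa⟩, rfl⟩
      have hx := hW x hxW
      have hxa' : x a = 0 := hxa
      rw [happly] at hx
      rcases ha with rfl | rfl <;> simpa [hxa'] using hx
    have := finrank_le_of_isTotallySingular_lowIndexForm (n + 1) _ hsing
    have := W.finrank_le_finrank_map_inf_ker_add_one _ π hker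
    omega

end QuadraticMap

namespace BinMatroid

lemma critNum_le_of_disjoint (M : BinMatroid) {W : Submodule (ZMod 2) (Fin M.dim → ZMod 2)}
    (hW : Disjoint ((W : Set (Fin M.dim → ZMod 2)) \ {0}) M.E) :
    M.critNum ≤ M.dim - finrank (ZMod 2) W := by
  have hWdim : finrank (ZMod 2) W ≤ M.dim := by simpa using Submodule.finrank_le W
  exact Nat.sInf_le ⟨W, by omega, hW⟩

lemma le_critNum (M : BinMatroid) {d : ℕ}
    (h : ∀ W : Submodule (ZMod 2) (Fin M.dim → ZMod 2),
      Disjoint ((W : Set (Fin M.dim → ZMod 2)) \ {0}) M.E → finrank (ZMod 2) W ≤ d) :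
    M.dim - d ≤ M.critNum := by
  unfold critNum
  obtain ⟨W, hWk, hW⟩ := Nat.sInf_mem
    (s := {k : ℕ | ∃ W : Submodule (ZMod 2) (Fin M.dim → ZMod 2),
      finrank (ZMod 2) W = M.dim - k ∧ Disjoint ((W : Set (Fin M.dim → ZMod 2)) \ {0}) M.E})
    ⟨M.dim, ⊥, by simp, by simp⟩
  have := h W hW
  omega

theorem critNum_le_of_memE_three {M : BinMatroid} (hM : M.MemE 3) :
    M.critNum ≤ M.dim / 2 + 1 := by
  obtain ⟨Q, hQ⟩ := (forall_even_ncard_iff_exists_quadraticForm M.zero_not_mem).1 hM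
  obtain ⟨W, -, hW, hdim⟩ := Q.exists_isTotallySingular_le ⊤
  rw [finrank_top, Module.finrank_fin_fun] at hdim
  have := M.critNum_le_of_disjoint (W := W) (hQ ▸ (QuadraticMap.disjoint_setOf_eq_one_iff Q W).2 hW)
  omega

def ofQuadraticForm {n : ℕ} (Q : QuadraticForm (ZMod 2) (Fin n → ZMod 2)) : BinMatroid where
  dim := n
  E := {x | Q x = 1}
  zero_not_mem := by simp

theorem ofQuadraticForm_memE_three {n : ℕ} (Q : QuadraticForm (ZMod 2) (Fin n → ZMod 2)) :
    (ofQuadraticForm Q).MemE 3 :=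
  (forall_even_ncard_iff_exists_quadraticForm (ofQuadraticForm Q).zero_not_mem).2 ⟨Q, rfl⟩

theorem critNum_ofQuadraticForm_lowIndexForm {n : ℕ} (hn : 1 ≤ n) :
    (ofQuadraticForm (QuadraticMap.lowIndexForm n)).critNum = n / 2 + 1 := by
  have hupper : _ ≤ n / 2 + 1 :=
    critNum_le_of_memE_three (ofQuadraticForm_memE_three (QuadraticMap.lowIndexForm n))
  have hlower : n - (n - 1) / 2 ≤ _ := (ofQuadraticForm _).le_critNum fun W hW =>
    QuadraticMap.finrank_le_of_isTotallySingular_lowIndexForm n W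
      ((QuadraticMap.disjoint_setOf_eq_one_iff _ W).1 hW)
  omega

end BinMatroid

/-- If `M ∈ ℰ₃` and `dim(M) = n` then `χ(M) ≤ ⌊n/2⌋ + 1`; moreover for
every `n ≥ 1` there is an `n`-dimensional `M ∈ ℰ₃` attaining equality. -/
theorem stmt13 :
    (∀ M : BinMatroid, M.MemE 3 → M.critNum ≤ M.dim / 2 + 1) ∧
    (∀ n : ℕ, 1 ≤ n →
      ∃ M : BinMatroid, M.MemE 3 ∧ M.dim = n ∧ M.critNum = n / 2 + 1) :=
  ⟨fun _ => BinMatroid.critNum_le_of_memE_three, fun _ hn =>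
    ⟨_, BinMatroid.ofQuadraticForm_memE_three _, rfl,
      BinMatroid.critNum_ofQuadraticForm_lowIndexForm hn⟩⟩
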